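/- arXiv:2304.03008 — 3 statements merged into one kernel-verified Lean document; each statement's English description precedes it below -/
import Mathlib

section
/- Let φ : X → Y be a homomorphism of odd or even involutive FL_e-chains. If u ∈ X is a positive idempotent such that u' is not idempotent, while (φ(u))' is idempotent in Y, then φ(u) = t_Y and (t_Y)' = t_Y (so Y is odd). -/
open Classical

universe u v

/-- An FL_e-chain: a totally ordered commutative monoid with a residuation operation
`imp` (so that `x * y ≤ z ↔ y ≤ imp x z`) and a falsum constant `fc`.
The monoid unit `1` plays the role of the constant `t`. -/
class FLeChain (X : Type u) extends LinearOrder X, CommMonoid X where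
  imp : X → X → X
  fc : X
  residuation : ∀ x y z : X, x * y ≤ z ↔ y ≤ imp x z

namespace FLe

variable {X : Type u}

/-- The residual `x → y`. -/
def imp [FLeChain X] (x y : X) : X := FLeChain.imp x y

/-- The falsum constant `f`. -/
def fc (X : Type u) [FLeChain X] : X := FLeChain.fc

/-- The residual complement `x' = x → f`. -/
def compl [FLeChain X] (x : X) : X := imp x (fc X)

/-- An FL_e-chain is involutive if `x'' = x` for all `x`. -/
def Involutive (X : Type u) [FLeChain X] : Prop := ∀ x : X, compl (compl x) = x

/-- An involutive FL_e-chain is odd if `t' = t`. -/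
def OddChain (X : Type u) [FLeChain X] : Prop := compl (1 : X) = 1

/-- An involutive FL_e-chain is even if `x < t ↔ x ≤ f` for all `x`. -/
def EvenChain (X : Type u) [FLeChain X] : Prop := ∀ x : X, x < 1 ↔ x ≤ fc X

/-- Odd or even involutive FL_e-chain. -/
def OddEven (X : Type u) [FLeChain X] : Prop := Involutive X ∧ (OddChain X ∨ EvenChain X)

/-- `x` is idempotent. -/
def IsIdem [Mul X] (x : X) : Prop := x * x = x

/-- Homomorphisms of FL_e-chains: order preserving, multiplicative, residual preserving,
and preserving both constants. -/
def IsFLeHom (X : Type u) (Y : Type v) [FLeChain X] [FLeChain Y] (φ : X → Y) : Prop :=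
  Monotone φ ∧ (∀ a b : X, φ (a * b) = φ a * φ b) ∧
    (∀ a b : X, φ (imp a b) = imp (φ a) (φ b)) ∧ φ (1 : X) = 1 ∧ φ (fc X) = fc Y

/-- The skeleton `κ`: the set of positive idempotent elements. -/
def kappa (X : Type u) [FLeChain X] : Set X := {u : X | 1 ≤ u ∧ IsIdem u}

/-- `κ_o`: it is `{t}` if the chain is odd, empty otherwise. -/
def kappaO (X : Type u) [FLeChain X] : Set X := {u : X | u = 1 ∧ OddChain X}

/-- The layer `L_u = {x : x → x = u}`. -/
def layer [FLeChain X] (u : X) : Set X := {x : X | imp x x = u}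

/-- `H_u = {x ∈ L_u : x · u' < x}`, the set of `u`-invertible elements of the layer. -/
def Hs [FLeChain X] (u : X) : Set X := {x : X | x ∈ layer u ∧ x * compl u < x}

/-- The dotted copy `•H_u = {x · u' : x ∈ H_u}`. -/
def dotH [FLeChain X] (u : X) : Set X := (fun x => x * compl u) '' Hs u

/-- `u ∈ κ_I`: a positive idempotent whose complement is idempotent, not in `κ_o`. -/
def inKI [FLeChain X] (u : X) : Prop := u ∈ kappa X ∧ IsIdem (compl u) ∧ u ∉ kappaO X

/-- `u ∈ κ_J`: a positive idempotent whose complement is not idempotent. -/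
def inKJ [FLeChain X] (u : X) : Prop := u ∈ kappa X ∧ ¬ IsIdem (compl u)

/-- The layer group carrier: `G_u = L_u \ •H_u` if `u ∈ κ_I`, and `G_u = L_u` otherwise. -/
def Gs [FLeChain X] (u : X) : Set X := {x : X | x ∈ layer u ∧ (inKI u → x ∉ dotH u)}

/-- The layer group multiplication: `x ·_u y = ((x·y)→u)→u` if `u ∈ κ_I`, `x·y` otherwise. -/
noncomputable def gmul [FLeChain X] (u x y : X) : X :=
  if inKI u then imp (imp (x * y) u) u else x * y

/-- The layer group inversion `x^{-1_u} = x → u`. -/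
def ginv [FLeChain X] (u x : X) : X := imp x u

/-- The union of all layer group carriers. -/
def GX (X : Type u) [FLeChain X] : Set X := ⋃ u ∈ kappa X, Gs u

end FLe

open FLe

section Aux

variable {Z : Type u} [FLeChain Z]

lemma res_iff (x y z : Z) : x * y ≤ z ↔ y ≤ imp x z := FLeChain.residuation x y z

lemma mul_imp_le (x z : Z) : x * imp x z ≤ z := (res_iff x (imp x z) z).2 le_rfl

lemma my_mul_le_mul_left {y z : Z} (h : y ≤ z) (x : Z) : x * y ≤ x * z :=
  (res_iff x y (x * z)).2 (h.trans ((res_iff x z (x * z)).1 le_rfl))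

lemma my_mul_le_mul_right {y z : Z} (h : y ≤ z) (x : Z) : y * x ≤ z * x := by
  rw [mul_comm y x, mul_comm z x]; exact my_mul_le_mul_left h x

lemma imp_le_imp_right {y z : Z} (h : y ≤ z) (x : Z) : imp x y ≤ imp x z :=
  (res_iff x (imp x y) z).1 ((mul_imp_le x y).trans h)

lemma imp_le_imp_left {a b : Z} (h : a ≤ b) (z : Z) : imp b z ≤ imp a z :=
  (res_iff a (imp b z) z).1 ((my_mul_le_mul_right h (imp b z)).trans (mul_imp_le b z))

lemma imp_one_eq (z : Z) : imp (1 : Z) z = z :=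
  le_antisymm (by simpa using mul_imp_le (1 : Z) z) ((res_iff 1 z z).1 (by simp))

lemma compl_one_eq : compl (1 : Z) = fc Z := imp_one_eq _

lemma fc_le_one (hZ : OddEven Z) : fc Z ≤ (1 : Z) := by
  rcases hZ.2 with h | h
  · rw [← compl_one_eq, h]
  · exact ((h (fc Z)).2 le_rfl).le

section PosIdem

variable {v : Z} (hv1 : 1 ≤ v) (hvv : v * v = v)

include hv1 hvv

lemma pos_idem_mul_compl : v * compl v = compl v := by
  have h2 : v * compl v ≤ fc Z := mul_imp_le v (fc Z)
  have h3 : v * (v * compl v) ≤ fc Z := by rw [← mul_assoc, hvv]; exact h2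
  refine le_antisymm ((res_iff v (v * compl v) (fc Z)).1 h3) ?_
  calc compl v = 1 * compl v := (one_mul _).symm
    _ ≤ v * compl v := my_mul_le_mul_right hv1 _

lemma pos_idem_compl_le_fc : compl v ≤ fc Z := by
  calc compl v = v * compl v := (pos_idem_mul_compl hv1 hvv).symm
    _ ≤ fc Z := mul_imp_le v (fc Z)

lemma pos_idem_imp_compl (hinv : Involutive Z) : imp (compl v) (compl v) = v := by
  refine le_antisymm ?_ ?_
  · have := imp_le_imp_right (pos_idem_compl_le_fc hv1 hvv) (compl v)
    calc imp (compl v) (compl v) ≤ imp (compl v) (fc Z) := this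
      _ = compl (compl v) := rfl
      _ = v := hinv v
  · refine (res_iff (compl v) v (compl v)).1 ?_
    rw [mul_comm]; exact (pos_idem_mul_compl hv1 hvv).le

end PosIdem

end Aux

/-- If `φ : X → Y` is a homomorphism of odd or even involutive FL_e-chains,
`u` is a positive idempotent of `X` such that `u'` is not idempotent while `(φ u)'` is
idempotent, then `φ u = t_Y` and `(t_Y)' = t_Y` (so `Y` is odd). -/
theorem hom_kJ_to_kO {X : Type u} {Y : Type v} [FLeChain X] [FLeChain Y]
    (hX : OddEven X) (hY : OddEven Y) (φ : X → Y) (hφ : IsFLeHom X Y φ)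
    (u : X) (hu : 1 ≤ u) (huid : IsIdem u)
    (h1 : ¬ IsIdem (compl u)) (h2 : IsIdem (compl (φ u))) :
    φ u = 1 ∧ compl (1 : Y) = 1 := by
  obtain ⟨hφmono, hφmul, hφimp, hφone, hφf⟩ := hφ
  have hφc : ∀ x : X, φ (compl x) = compl (φ x) := fun x => by
    show φ (imp x (fc X)) = imp (φ x) (fc Y)
    rw [hφimp, hφf]
  -- Y side: v := φ u is a positive idempotent
  have hv1 : (1 : Y) ≤ φ u := hφone ▸ hφmono hu
  have hvv : φ u * φ u = φ u := by rw [← hφmul]; exact congrArg φ huid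
  -- X side
  have hufc : compl u ≤ fc X := pos_idem_compl_le_fc hu huid
  have hu'1 : compl u ≤ 1 := hufc.trans (fc_le_one hX)
  have hs_le : compl u * compl u ≤ compl u := by
    calc compl u * compl u ≤ compl u * 1 := my_mul_le_mul_left hu'1 _
      _ = compl u := mul_one _
  have hs_lt : compl u * compl u < compl u := lt_of_le_of_ne hs_le (fun h => h1 h)
  set e := imp (compl u) (compl u * compl u) with he_def
  have he_lt : e < 1 := by
    by_contra h
    have h1e : (1 : X) ≤ e := not_lt.1 h
    have : compl u ≤ compl u * compl u := by
      calc compl u = compl u * 1 := (mul_one _).symm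
        _ ≤ compl u * e := my_mul_le_mul_left h1e _
        _ ≤ compl u * compl u := mul_imp_le _ _
    exact absurd this (not_le.2 hs_lt)
  have hφe : φ e = φ u := by
    have : φ e = imp (compl (φ u)) (compl (φ u) * compl (φ u)) := by
      rw [he_def, show imp (compl u) (compl u * compl u)
          = FLe.imp (compl u) (compl u * compl u) from rfl, hφimp, hφmul, hφc]
    rw [this, h2]
    exact pos_idem_imp_compl hv1 hvv hY.1
  have hveq : φ u = 1 := le_antisymm (by rw [← hφe, ← hφone]; exact hφmono he_lt.le) hv1
  refine ⟨hveq, ?_⟩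
  rcases hY.2 with hodd | heven
  · exact hodd
  · exfalso
    have hfY : fc Y < 1 := (heven (fc Y)).2 le_rfl
    rcases hX.2 with hoddX | hevenX
    · -- X odd: fc X = 1
      have hfx : fc X = (1 : X) := by rw [← compl_one_eq]; exact hoddX
      have h1e : (1 : X) ≤ compl e := by
        show (1 : X) ≤ imp e (fc X)
        have h := imp_le_imp_left he_lt.le (fc X)
        rw [imp_one_eq] at h
        calc (1 : X) = fc X := hfx.symm
          _ ≤ imp e (fc X) := h
      have h2e : (1 : Y) ≤ φ (compl e) := hφone ▸ hφmono h1e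
      rw [hφc, hφe, hveq, compl_one_eq] at h2e
      exact absurd h2e (not_le.2 hfY)
    · -- X even
      have heX : e ≤ fc X := (hevenX e).1 he_lt
      have : φ e ≤ fc Y := hφf ▸ hφmono heX
      rw [hφe, hveq] at this
      exact absurd this (not_le.2 hfY)
end

section
/- In an odd or even involutive FL_e-chain X, the set {x→x : x ∈ X} coincides with the set of positive idempotent elements of X, i.e. {x→x : x ∈ X} = {u ∈ X : u ≥ t and u·u = u}. -/
open Classical

universe u v

open FLe

/-- In an odd or even involutive FL_e-chain, the set `{x→x : x ∈ X}`
coincides with the set `{u : u ≥ t and u·u = u}` of positive idempotent elements. -/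
theorem localUnits_eq_positive_idempotents {X : Type u} [FLeChain X] (h : OddEven X) :
    {v : X | ∃ x : X, imp x x = v} = {u : X | 1 ≤ u ∧ IsIdem u} := by
  have res : ∀ x y z : X, x * y ≤ z ↔ y ≤ imp x z := FLeChain.residuation
  have mono : ∀ a b c : X, a ≤ b → c * a ≤ c * b := by
    intro a b c hab
    exact (res c a (c * b)).mpr (le_trans hab ((res c b (c * b)).mp le_rfl))
  ext v
  constructor
  · rintro ⟨x, rfl⟩
    constructor
    · exact (res x 1 x).mp (by simpa using le_refl x)
    · have hx : x * imp x x ≤ x := (res x (imp x x) x).mpr le_rfl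
      have h1 : (1 : X) ≤ imp x x := (res x 1 x).mp (by simpa using le_refl x)
      have hle : imp x x * imp x x ≤ imp x x := by
        apply (res x (imp x x * imp x x) x).mp
        calc x * (imp x x * imp x x) = (x * imp x x) * imp x x := by simp [mul_comm, mul_assoc, mul_left_comm]
          _ ≤ x * imp x x := by
              calc (x * imp x x) * imp x x = imp x x * (x * imp x x) := by simp [mul_comm, mul_assoc, mul_left_comm]
                _ ≤ imp x x * x := mono _ _ _ hx
                _ = x * imp x x := by simp [mul_comm, mul_assoc, mul_left_comm]
          _ ≤ x := hx
      have hge : imp x x ≤ imp x x * imp x x := by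
        calc imp x x = imp x x * 1 := by simp [mul_comm, mul_assoc, mul_left_comm]
          _ ≤ imp x x * imp x x := mono _ _ _ h1
      exact le_antisymm hle hge
  · rintro ⟨hpos, hid⟩
    refine ⟨v, ?_⟩
    have hge : v ≤ imp v v := (res v v v).mp (le_of_eq hid)
    have hle : imp v v ≤ v := by
      have h1 : v * imp v v ≤ v := (res v (imp v v) v).mpr le_rfl
      calc imp v v = 1 * imp v v := by simp [mul_comm, mul_assoc, mul_left_comm]
        _ ≤ v * imp v v := by
            calc 1 * imp v v = imp v v * 1 := by simp [mul_comm, mul_assoc, mul_left_comm]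
              _ ≤ imp v v * v := mono _ _ _ hpos
              _ = v * imp v v := by simp [mul_comm, mul_assoc, mul_left_comm]
        _ ≤ v := h1
    exact le_antisymm hle hge
end

section
/- (Representation, direction A.) Let X = (X, ≤, ·, →, t, f) be an odd or even involutive FL_e-chain. Define κ = {x→x : x ∈ X} (the set of positive idempotents, ordered by ≤), κ̄_I = {u ∈ κ \ {t} : u' idempotent}, κ̄_J = {u ∈ κ \ {t} : u' not idempotent}, and set (κ_o, κ_J, κ_I) = ({t}, κ̄_J, κ̄_I) if X is odd, (∅, κ̄_J ∪ {t}, κ̄_I) if X is even and f is not idempotent, and (∅, κ̄_J, κ̄_I ∪ {t}) if X is even and f is idempotent. For u ∈ κ let L_u = {x ∈ X : x→x = u}, H_u = {x ∈ L_u : x·u' < x}, •H_u = {x·u' : x ∈ H_u}, G_u = L_u \ •H_u if u ∈ κ_I and G_u = L_u otherwise, with product x ·_u y = ((x·y)→u)→u if u ∈ κ_I and x·y otherwise, inverse x^{-1_u} = x→u, unit u, order restricted from ≤, and for u ≤ v let ς_{u→v}(x) = v·x. Then 𝒢_X = ⟨G_u, H_u, ς_{u→v}⟩ over ⟨κ_o,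 κ_J, κ_I, ≤⟩ is a bunch of layer groups. -/
open Classical

universe u v

/-! ### Bunches of layer groups -/

/-- The data of a bunch of layer groups over a skeleton type `K` with layers carried by
subsets of an ambient type `Λ`:  a least element `t`, a partition `(Ko, KJ, KI)` of the
skeleton, layer group carriers `G u` with distinguished subsets `H u`, layerwise group
operations `mul`, `inv`, `unit`, layerwise orders `le`, and transitions `tr u v`. -/
structure BunchData (K : Type u) (Λ : Type v) where
  t : K
  Ko : Set K
  KJ : Set K
  KI : Set K
  G : K → Set Λ
  H : K → Set Λ
  mul : K → Λ → Λ → Λ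
  inv : K → Λ → Λ
  unit : K → Λ
  le : K → Λ → Λ → Prop
  tr : K → K → Λ → Λ

namespace BunchData

variable {K : Type u} {Λ : Type v}

/-- Strict layerwise order. -/
def lt (B : BunchData K Λ) (u : K) (x y : Λ) : Prop := B.le u x y ∧ x ≠ y

/-- `p` is the lower cover of `x` in the layer group `G u`. -/
def IsLowerCoverIn (B : BunchData K Λ) (u : K) (p x : Λ) : Prop :=
  p ∈ B.G u ∧ B.lt u p x ∧ ∀ z ∈ B.G u, B.lt u z x → B.le u z p

/-- `s` is the upper cover of `x` in the layer group `G u`. -/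
def IsUpperCoverIn (B : BunchData K Λ) (u : K) (s x : Λ) : Prop :=
  s ∈ B.G u ∧ B.lt u x s ∧ ∀ z ∈ B.G u, B.lt u x z → B.le u s z

/-- The axioms of a bunch of layer groups:  a direct system of totally ordered abelian
groups over a totally ordered skeleton with least element `t` partitioned into
`Ko ∪ KJ ∪ KI`, satisfying (G1), (G2) and (G3). -/
structure IsBunch [LinearOrder K] (B : BunchData K Λ) : Prop where
  t_least : ∀ u : K, B.t ≤ u
  cover : ∀ u : K, u ∈ B.Ko ∨ u ∈ B.KJ ∨ u ∈ B.KI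
  disjOJ : ∀ u : K, ¬(u ∈ B.Ko ∧ u ∈ B.KJ)
  disjOI : ∀ u : K, ¬(u ∈ B.Ko ∧ u ∈ B.KI)
  disjJI : ∀ u : K, ¬(u ∈ B.KJ ∧ u ∈ B.KI)
  -- each layer is a totally ordered abelian group
  unit_mem : ∀ u : K, B.unit u ∈ B.G u
  mul_mem : ∀ u : K, ∀ x ∈ B.G u, ∀ y ∈ B.G u, B.mul u x y ∈ B.G u
  inv_mem : ∀ u : K, ∀ x ∈ B.G u, B.inv u x ∈ B.G u
  mul_assoc' : ∀ u : K, ∀ x ∈ B.G u, ∀ y ∈ B.G u, ∀ z ∈ B.G u,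
    B.mul u (B.mul u x y) z = B.mul u x (B.mul u y z)
  mul_comm' : ∀ u : K, ∀ x ∈ B.G u, ∀ y ∈ B.G u, B.mul u x y = B.mul u y x
  mul_unit' : ∀ u : K, ∀ x ∈ B.G u, B.mul u x (B.unit u) = x
  mul_inv' : ∀ u : K, ∀ x ∈ B.G u, B.mul u x (B.inv u x) = B.unit u
  le_refl' : ∀ u : K, ∀ x ∈ B.G u, B.le u x x
  le_trans' : ∀ u : K, ∀ x ∈ B.G u, ∀ y ∈ B.G u, ∀ z ∈ B.G u,
    B.le u x y → B.le u y z → B.le u x z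
  le_antisymm' : ∀ u : K, ∀ x ∈ B.G u, ∀ y ∈ B.G u, B.le u x y → B.le u y x → x = y
  le_total' : ∀ u : K, ∀ x ∈ B.G u, ∀ y ∈ B.G u, B.le u x y ∨ B.le u y x
  mul_le_mul' : ∀ u : K, ∀ x ∈ B.G u, ∀ y ∈ B.G u, ∀ z ∈ B.G u,
    B.le u x y → B.le u (B.mul u z x) (B.mul u z y)
  -- a direct system of o-group homomorphisms
  tr_mem : ∀ u v : K, u ≤ v → ∀ x ∈ B.G u, B.tr u v x ∈ B.G v
  tr_id : ∀ u : K, ∀ x ∈ B.G u, B.tr u u x = x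
  tr_comp : ∀ u v w : K, u ≤ v → v ≤ w → ∀ x ∈ B.G u, B.tr v w (B.tr u v x) = B.tr u w x
  tr_unit : ∀ u v : K, u ≤ v → B.tr u v (B.unit u) = B.unit v
  tr_mul : ∀ u v : K, u ≤ v → ∀ x ∈ B.G u, ∀ y ∈ B.G u,
    B.tr u v (B.mul u x y) = B.mul v (B.tr u v x) (B.tr u v y)
  tr_mono : ∀ u v : K, u ≤ v → ∀ x ∈ B.G u, ∀ y ∈ B.G u,
    B.le u x y → B.le v (B.tr u v x) (B.tr u v y)
  -- (G1)
  g1 : B.Ko ⊆ {B.t}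
  -- (G2): for v ∈ κ_I, H_v ≤ G_v and transitions from strictly below map into H_v
  g2_sub : ∀ v ∈ B.KI, B.H v ⊆ B.G v ∧ B.unit v ∈ B.H v ∧
    (∀ x ∈ B.H v, ∀ y ∈ B.H v, B.mul v x y ∈ B.H v) ∧ (∀ x ∈ B.H v, B.inv v x ∈ B.H v)
  g2_tr : ∀ v ∈ B.KI, ∀ u : K, u < v → ∀ x ∈ B.G u, B.tr u v x ∈ B.H v
  -- (G3): κ_J-layers are discretely ordered and transitions identify the unit with its
  -- lower cover
  g3_disc : ∀ u ∈ B.KJ, ∀ x ∈ B.G u,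
    (∃ p, B.IsLowerCoverIn u p x) ∧ (∃ s, B.IsUpperCoverIn u s x)
  g3_tr : ∀ u ∈ B.KJ, ∀ v : K, u < v → ∀ p, B.IsLowerCoverIn u p (B.unit u) →
    B.tr u v (B.unit u) = B.tr u v p

end BunchData

/-! ### The bunch of layer groups of an odd or even involutive FL_e-chain -/

namespace FLe

/-- The skeleton of an FL_e-chain, as a type. -/
abbrev kappaT (X : Type u) [FLeChain X] := {w : X // w ∈ kappa X}

/-- The bunch of layer groups `𝒢_X` of an FL_e-chain `X`
(Theorem KATEGOR_BUNCH_X/(A)). -/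
noncomputable def bunchOfChain (X : Type u) [FLeChain X] : BunchData (kappaT X) X where
  t := ⟨1, le_refl 1, mul_one 1⟩
  Ko := {w : kappaT X | (w : X) ∈ kappaO X}
  KJ := {w : kappaT X | inKJ (w : X)}
  KI := {w : kappaT X | inKI (w : X)}
  G w := Gs (w : X)
  H w := Hs (w : X)
  mul w x y := gmul (w : X) x y
  inv w x := ginv (w : X) x
  unit w := (w : X)
  le _ x y := x ≤ y
  tr _ v x := (v : X) * x

end FLe

/-! ### The involutive FL_e-chain of a bunch of layer groups -/

namespace BunchData

variable {K : Type u} {Λ : Type v}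

/-- Raw elements of the constructed chain live in `K × Λ × Bool`;  the element
`(u, z, false)` represents `z ∈ G_u ⊆ L_u`, and `(u, a, true)` represents the dotted copy
`•a ∈ •H_u` (for `u ∈ κ_I`, `a ∈ H_u`). -/
def carrier (B : BunchData K Λ) : Set (K × Λ × Bool) :=
  {p | (p.2.2 = false ∧ p.2.1 ∈ B.G p.1) ∨ (p.2.2 = true ∧ p.1 ∈ B.KI ∧ p.2.1 ∈ B.H p.1)}

variable [LinearOrder K]

/-- The map `ρ_v`: it fixes the layers indexed by `u ≥ v` and pushes the lower layers
into `G_v` by `ς_{u→v} ∘ γ_u`. -/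
def rho (B : BunchData K Λ) (v : K) (p : K × Λ × Bool) : K × Λ × Bool :=
  if v ≤ p.1 then p else (v, B.tr p.1 v p.2.1, false)

/-- The strict order within the layer `L_w`:  dotted copies are inserted immediately
below their originals. -/
def llt (B : BunchData K Λ) (w : K) (p q : K × Λ × Bool) : Prop :=
  B.lt w p.2.1 q.2.1 ∨ (p.2.1 = q.2.1 ∧ p.2.2 = true ∧ q.2.2 = false)

/-- The strict order of the constructed chain:
`x < y` iff `ρ_{uv}(x) <_{uv} ρ_{uv}(y)` or (`ρ_{uv}(x) = ρ_{uv}(y)` and `u <_κ v`). -/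
def glt (B : BunchData K Λ) (p q : K × Λ × Bool) : Prop :=
  B.llt (max p.1 q.1) (B.rho (max p.1 q.1) p) (B.rho (max p.1 q.1) q) ∨
    (B.rho (max p.1 q.1) p = B.rho (max p.1 q.1) q ∧ p.1 < q.1)

/-- The order of the constructed chain. -/
def gle (B : BunchData K Λ) (p q : K × Λ × Bool) : Prop := B.glt p q ∨ p = q

/-- The product `∗_w` within the layer `L_w`. -/
noncomputable def star (B : BunchData K Λ) (w : K) (p q : K × Λ × Bool) : K × Λ × Bool :=
  if w ∈ B.KI ∧ B.mul w p.2.1 q.2.1 ∈ B.H w ∧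
      ¬(p.2.1 ∈ B.H w ∧ p.2.2 = false ∧ q.2.1 ∈ B.H w ∧ q.2.2 = false)
  then (w, B.mul w p.2.1 q.2.1, true)
  else (w, B.mul w p.2.1 q.2.1, false)

/-- The multiplication of the constructed chain: `x · y = ρ_{uv}(x) ∗_{uv} ρ_{uv}(y)`. -/
noncomputable def gmulB (B : BunchData K Λ) (p q : K × Λ × Bool) : K × Λ × Bool :=
  B.star (max p.1 q.1) (B.rho (max p.1 q.1) p) (B.rho (max p.1 q.1) q)

/-- The lower cover of `y` in the layer group `G_u` (chosen classically). -/
noncomputable def lowerCoverFn (B : BunchData K Λ) (u : K) (y : Λ) : Λ :=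
  @Classical.epsilon Λ ⟨B.unit B.t⟩ (fun p => B.IsLowerCoverIn u p y)

/-- The residual complement `x^⊥` of the constructed chain. -/
noncomputable def negB (B : BunchData K Λ) (p : K × Λ × Bool) : K × Λ × Bool :=
  if p.1 ∈ B.KI ∧ p.2.2 = true then (p.1, B.inv p.1 p.2.1, false)
  else if p.1 ∈ B.KI ∧ p.2.1 ∈ B.H p.1 then (p.1, B.inv p.1 p.2.1, true)
  else if p.1 ∈ B.KJ then (p.1, B.lowerCoverFn p.1 (B.inv p.1 p.2.1), false)
  else (p.1, B.inv p.1 p.2.1, false)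

/-- The residual of the constructed chain: `x → y = (x · y^⊥)^⊥`. -/
noncomputable def impB (B : BunchData K Λ) (p q : K × Λ × Bool) : K × Λ × Bool :=
  B.negB (B.gmulB p (B.negB q))

/-- The unit `t` of the constructed chain. -/
def tB (B : BunchData K Λ) : K × Λ × Bool := (B.t, B.unit B.t, false)

/-- The falsum `f = t^⊥` of the constructed chain. -/
noncomputable def fB (B : BunchData K Λ) : K × Λ × Bool := B.negB B.tB

end BunchData

/-! ### Chain operations on a subset of an ambient type, and the induced layer data -/

/-- The operations of an FL_e-chain carried by a subset `C` of an ambient type `A`. -/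
structure ChainOps (A : Type u) where
  C : Set A
  mul : A → A → A
  imp : A → A → A
  le : A → A → Prop
  t : A
  f : A

namespace ChainOps

variable {A : Type u} (O : ChainOps A)

def lt (x y : A) : Prop := O.le x y ∧ x ≠ y
def compl (x : A) : A := O.imp x O.f
def IsIdem (x : A) : Prop := O.mul x x = x
def kappa : Set A := {w : A | w ∈ O.C ∧ O.le O.t w ∧ O.IsIdem w}
def isOdd : Prop := O.compl O.t = O.t
def kappaO : Set A := {w : A | w = O.t ∧ O.isOdd}
def inKI (w : A) : Prop := w ∈ O.kappa ∧ O.IsIdem (O.compl w) ∧ w ∉ O.kappaO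
def inKJ (w : A) : Prop := w ∈ O.kappa ∧ ¬ O.IsIdem (O.compl w)
def layer (w : A) : Set A := {x : A | x ∈ O.C ∧ O.imp x x = w}
def Hs (w : A) : Set A := {x : A | x ∈ O.layer w ∧ O.lt (O.mul x (O.compl w)) x}
def dotH (w : A) : Set A := (fun x => O.mul x (O.compl w)) '' O.Hs w
def Gs (w : A) : Set A := {x : A | x ∈ O.layer w ∧ (O.inKI w → x ∉ O.dotH w)}
noncomputable def gmul (w x y : A) : A :=
  if O.inKI w then O.imp (O.imp (O.mul x y) w) w else O.mul x y
def ginv (w x : A) : A := O.imp x w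
def tr (v x : A) : A := O.mul v x

end ChainOps

/-! ### Bunch homomorphisms -/

/-- A bunch homomorphism from `B₁` to `B₂`, given by its skeleton part `σ` and its action
`Φ` on the union of the layer groups;  conditions (S1)–(S8). -/
def IsBunchHomB {K₁ Λ₁ K₂ Λ₂ : Type*}
    [LinearOrder K₁] [LinearOrder K₂]
    (B₁ : BunchData K₁ Λ₁) (B₂ : BunchData K₂ Λ₂) (σ : K₁ → K₂) (Φ : Λ₁ → Λ₂) : Prop :=
  -- (S1): the skeleton part is isotone
  Monotone σ ∧
  -- (S2): each Φ_u is an o-group homomorphism from G_u into G_{σ u}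
  (∀ u : K₁, ∀ x ∈ B₁.G u, Φ x ∈ B₂.G (σ u)) ∧
  (∀ u : K₁, Φ (B₁.unit u) = B₂.unit (σ u)) ∧
  (∀ u : K₁, ∀ x ∈ B₁.G u, ∀ y ∈ B₁.G u, Φ (B₁.mul u x y) = B₂.mul (σ u) (Φ x) (Φ y)) ∧
  (∀ u : K₁, ∀ x ∈ B₁.G u, Φ (B₁.inv u x) = B₂.inv (σ u) (Φ x)) ∧
  (∀ u : K₁, ∀ x ∈ B₁.G u, ∀ y ∈ B₁.G u, B₁.le u x y → B₂.le (σ u) (Φ x) (Φ y)) ∧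
  -- (S3): Φ commutes with the transitions
  (∀ u v : K₁, u ≤ v → ∀ x ∈ B₁.G u, Φ (B₁.tr u v x) = B₂.tr (σ u) (σ v) (Φ x)) ∧
  -- (S4): the least element of the skeleton is preserved
  σ B₁.t = B₂.t ∧
  -- (S5): the partition is respected
  (∀ u ∈ B₁.Ko, σ u ∈ B₂.Ko) ∧
  (∀ u ∈ B₁.KJ, σ u ∈ B₂.KJ ∨ σ u ∈ B₂.Ko) ∧
  (∀ u ∈ B₁.KI, σ u ∈ B₂.KI ∨ σ u ∈ B₂.Ko) ∧
  -- (S6): subgroups and their complements are preserved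
  (∀ u ∈ B₁.KI, σ u ∈ B₂.KI →
    (∀ x ∈ B₁.H u, Φ x ∈ B₂.H (σ u)) ∧
    (∀ x ∈ B₁.G u, x ∉ B₁.H u → Φ x ∈ B₂.G (σ u) ∧ Φ x ∉ B₂.H (σ u))) ∧
  -- (S7): the neighborhood operations are respected
  (∀ u ∈ B₁.KJ, σ u ∈ B₂.KJ →
    ∀ x ∈ B₁.G u, ∀ p, B₁.IsLowerCoverIn u p x → B₂.IsLowerCoverIn (σ u) (Φ p) (Φ x)) ∧
  (∀ u ∈ B₁.KJ, σ u ∈ B₂.Ko →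
    ∀ x ∈ B₁.G u, ∀ p, B₁.IsLowerCoverIn u p x → Φ p = Φ x) ∧
  -- (S8): partial injectivity
  (∀ u v : K₁, ∀ x ∈ B₁.G u, ∀ y ∈ B₁.G v,
    σ (max u v) ∈ B₂.KI →
    B₁.tr u (max u v) x ∈ B₁.H (max u v) →
    B₁.IsLowerCoverIn (max u v) (B₁.tr v (max u v) y) (B₁.tr u (max u v) x) →
    B₂.IsLowerCoverIn (σ (max u v)) (Φ (B₁.tr v (max u v) y)) (Φ (B₁.tr u (max u v) x)))

/-- An isomorphism in the category of bunches of layer groups. -/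
def IsBunchIso {K₁ Λ₁ K₂ Λ₂ : Type*}
    [LinearOrder K₁] [LinearOrder K₂]
    (B₁ : BunchData K₁ Λ₁) (B₂ : BunchData K₂ Λ₂) (σ : K₁ → K₂) (Φ : Λ₁ → Λ₂) : Prop :=
  IsBunchHomB B₁ B₂ σ Φ ∧
    ∃ (σ' : K₂ → K₁) (Φ' : Λ₂ → Λ₁), IsBunchHomB B₂ B₁ σ' Φ' ∧
      (∀ u : K₁, σ' (σ u) = u) ∧ (∀ v : K₂, σ (σ' v) = v) ∧
      (∀ u : K₁, ∀ x ∈ B₁.G u, Φ' (Φ x) = x) ∧ (∀ v : K₂, ∀ y ∈ B₂.G v, Φ (Φ' y) = y)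

namespace FLe

/-- The extension of a bunch homomorphism `Φ` between the bunches of two chains to the
whole chain: on `G_u` it is `Φ`, and the dotted copy `•a ∈ •H_u` is sent to `Φ(a)` if
`Φ(u) ∈ κ_o`, and to the dotted copy `•(Φ a)` if `Φ(u) ∈ κ_I`. -/
noncomputable def extendHom (X : Type u) (Y : Type v) [FLeChain X] [FLeChain Y]
    (Φ : X → Y) (x : X) : Y :=
  if x ∈ Gs (imp x x) then Φ x
  else if inKI (Φ (imp x x)) then Φ (imp (compl x) (imp x x)) * compl (Φ (imp x x))
  else Φ (imp (compl x) (imp x x))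

end FLe

namespace BunchAux

open FLe

variable {X : Type u} [FLeChain X]

private lemma resid {x y z : X} : x * y ≤ z ↔ y ≤ imp x z :=
  FLeChain.residuation x y z

private lemma mul_imp_le (x z : X) : x * imp x z ≤ z := resid.mpr le_rfl

private lemma le_imp_mul (x y : X) : y ≤ imp x (x * y) := resid.mp le_rfl

private lemma mul_monoL {a b : X} (c : X) (h : a ≤ b) : c * a ≤ c * b :=
  resid.mpr (le_trans h (le_imp_mul c b))

private lemma mul_monoR {a b : X} (c : X) (h : a ≤ b) : a * c ≤ b * c := by
  rw [mul_comm a c, mul_comm b c]; exact mul_monoL c h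

private lemma imp_monoR {y z : X} (x : X) (h : y ≤ z) : imp x y ≤ imp x z :=
  resid.mp (le_trans (mul_imp_le x y) h)

private lemma imp_antiL {x y : X} (z : X) (h : x ≤ y) : imp y z ≤ imp x z :=
  resid.mp (le_trans (mul_monoR _ h) (mul_imp_le y z))

private lemma imp_curry (x y z : X) : imp (x * y) z = imp y (imp x z) := by
  apply le_antisymm
  · apply resid.mp
    apply resid.mp
    rw [← mul_assoc]
    exact mul_imp_le _ _
  · apply resid.mp
    rw [mul_assoc]
    exact le_trans (mul_monoL _ (mul_imp_le _ _)) (mul_imp_le _ _)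

private lemma imp_one (y : X) : imp (1 : X) y = y :=
  le_antisymm (by simpa using mul_imp_le 1 y) (resid.mp (by simp))

/-- `τ x = x → x`. -/
private def tau (x : X) : X := imp x x

private lemma one_le_tau (x : X) : (1 : X) ≤ tau x := resid.mp (by simp)

private lemma le_tau_iff {a x : X} : a ≤ tau x ↔ x * a ≤ x := resid.symm

private lemma mul_tau (x : X) : x * tau x = x :=
  le_antisymm (le_tau_iff.mp le_rfl) (by simpa using mul_monoL x (one_le_tau x))

private lemma tau_mul_tau (x : X) : tau x * tau x = tau x :=
  le_antisymm (le_tau_iff.mpr (by rw [← mul_assoc, mul_tau, mul_tau]))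
    (by simpa using mul_monoR (tau x) (one_le_tau x))

private lemma tau_fix {e : X} (h1 : (1 : X) ≤ e) (he : e * e = e) : tau e = e := by
  apply le_antisymm
  · calc tau e = 1 * tau e := (one_mul _).symm
      _ ≤ e * tau e := mul_monoR _ h1
      _ = e := mul_tau e
  · exact le_tau_iff.mpr (le_of_eq he)

private lemma compl_anti {x y : X} (h : x ≤ y) : compl y ≤ compl x := imp_antiL _ h

private lemma mul_compl_le (x : X) : x * compl x ≤ fc X := mul_imp_le x _

private lemma compl_mul (x y : X) : compl (x * y) = imp x (compl y) := by
  show imp (x * y) (fc X) = imp x (compl y)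
  rw [mul_comm x y, imp_curry]; rfl

private lemma imp_eq (hi : Involutive X) (x y : X) : imp x y = compl (x * compl y) := by
  rw [compl_mul, hi y]

private lemma le_iff_f (hi : Involutive X) {x y : X} : x ≤ y ↔ x * compl y ≤ fc X := by
  constructor
  · intro h; exact le_trans (mul_monoR _ h) (mul_compl_le y)
  · intro h
    have h2 : x ≤ compl (compl y) := resid.mp (by rw [mul_comm]; exact h)
    rwa [hi y] at h2

private lemma compl_le_compl (hi : Involutive X) {x y : X} (h : compl y ≤ compl x) :
    x ≤ y := by
  have h2 := compl_anti h; rwa [hi, hi] at h2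

private lemma compl_inj (hi : Involutive X) {x y : X} (h : compl x = compl y) : x = y := by
  rw [← hi x, h, hi]

private lemma compl_lt_compl (hi : Involutive X) {x y : X} (h : compl y < compl x) :
    x < y :=
  lt_of_le_of_ne (compl_le_compl hi h.le) (fun e => absurd (congrArg FLe.compl e) h.ne')

private lemma tau_compl (hi : Involutive X) (x : X) : tau (compl x) = tau x := by
  unfold tau
  rw [imp_eq hi (compl x) (compl x), hi x, imp_eq hi x x, mul_comm (compl x) x]

private lemma mul_self_compl (hi : Involutive X) (x : X) :
    x * compl x = compl (tau x) := by
  have h : tau x = compl (x * compl x) := by unfold tau; rw [imp_eq hi x x]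
  rw [h, hi]

private lemma compl_le_f {u : X} (h1 : (1 : X) ≤ u) : compl u ≤ fc X := by
  have h2 := imp_antiL (fc X) h1
  rwa [imp_one] at h2

private lemma no_mid (hi : Involutive X) (hf : fc X ≤ 1)
    (hE : ∀ a : X, fc X < a → (1 : X) ≤ a)
    {z : X} (h1 : compl (tau z) < z) (h2 : z < tau z) : False := by
  have hzc : z * tau z = z := mul_tau z
  have h1' : fc X < z := by
    rcases lt_or_ge (fc X) z with hh | hh
    · exact hh
    · exfalso
      have hzz : z ≤ compl (tau z) := by
        apply resid.mp
        rw [mul_comm, hzc]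
        exact hh
      exact absurd hzz (not_le_of_gt h1)
  have hz1 : (1 : X) ≤ z := hE z h1'
  have h2' : fc X < compl z := by
    rcases lt_or_ge (fc X) (compl z) with hh | hh
    · exact hh
    · exfalso
      have htz : tau z * compl z = compl z := by
        have h3 := mul_tau (compl z)
        rw [tau_compl hi] at h3
        rw [mul_comm]; exact h3
      have hzz : tau z ≤ z := by
        have h5 : tau z ≤ compl (compl z) := by
          apply resid.mp
          rw [mul_comm, htz]
          exact hh
        rwa [hi z] at h5
      exact absurd hzz (not_le_of_gt h2)
  have key : z * compl z = compl (tau z) := mul_self_compl hi z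
  have h3 : compl z ≤ compl (tau z) := by
    rw [← key]
    calc compl z = 1 * compl z := (one_mul _).symm
      _ ≤ z * compl z := mul_monoR _ hz1
  have h4 : compl z ≤ fc X := le_trans h3 (compl_le_f (one_le_tau z))
  exact absurd h2' (not_lt_of_ge h4)

private lemma tau_mul_of_le (hi : Involutive X) (hf : fc X ≤ 1)
    (hE : ∀ a : X, fc X < a → (1 : X) ≤ a)
    {x y : X} (hxy : tau x ≤ tau y) : tau (x * y) = tau y := by
  apply le_antisymm
  · by_contra hc
    push_neg at hc
    set a := imp y (x * y) with ha
    have hxa : x ≤ a := resid.mp (le_of_eq (mul_comm y x))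
    have hya : y * a = x * y :=
      le_antisymm (mul_imp_le y _) (by rw [mul_comm x y]; exact mul_monoL y hxa)
    have hwa : tau (x * y) ≤ tau a := by
      apply le_tau_iff.mpr
      show a * tau (x * y) ≤ imp y (x * y)
      apply resid.mp
      rw [← mul_assoc, hya]
      exact le_of_eq (mul_tau (x * y))
    have hxlta : x < a := by
      apply lt_of_le_of_ne hxa
      intro hxe
      rw [← hxe] at hwa
      exact absurd (hwa.trans hxy) (not_le_of_gt hc)
    have hk : fc X < a * compl x := by
      by_contra hk'
      push_neg at hk'
      exact absurd ((le_iff_f hi).mpr hk') (not_le_of_gt hxlta)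
    have hk1 : (1 : X) ≤ a * compl x := hE _ hk
    have hky : y * (a * compl x) ≤ y := by
      have e1 : y * (a * compl x) = (x * y) * compl x := by rw [← mul_assoc, hya]
      rw [e1]
      calc (x * y) * compl x = y * (x * compl x) := by
            rw [mul_comm x y, mul_assoc]
        _ ≤ y * 1 := mul_monoL y (le_trans (mul_compl_le x) hf)
        _ = y := mul_one y
    have hkv : a * compl x ≤ tau y := le_tau_iff.mpr hky
    have hkv' : (a * compl x) * tau y = tau y := by
      apply le_antisymm
      · calc (a * compl x) * tau y ≤ tau y * tau y := mul_monoR _ hkv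
          _ = tau y := tau_mul_tau y
      · simpa using mul_monoR (tau y) hk1
    have htk_le : tau (a * compl x) ≤ tau y := by
      have e1 : tau (a * compl x) ≤ tau ((a * compl x) * tau y) := by
        apply le_tau_iff.mpr
        apply le_of_eq
        rw [mul_right_comm (a * compl x) (tau y) (tau (a * compl x)), mul_tau]
      have e2 : tau ((a * compl x) * tau y) = tau y := by
        rw [hkv']; exact tau_fix (one_le_tau y) (tau_mul_tau y)
      rwa [e2] at e1
    have htk_ge : tau (x * y) ≤ tau (a * compl x) := by
      have e1 : tau a ≤ tau (a * compl x) := by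
        apply le_tau_iff.mpr
        apply le_of_eq
        rw [mul_right_comm a (compl x) (tau a), mul_tau]
      exact le_trans hwa e1
    exact absurd (le_trans htk_ge htk_le) (not_le_of_gt hc)
  · apply le_tau_iff.mpr
    apply le_of_eq
    rw [mul_assoc, mul_tau]

private lemma tau_mul_eq (hi : Involutive X) (hf : fc X ≤ 1)
    (hE : ∀ a : X, fc X < a → (1 : X) ≤ a)
    {x y u : X} (hx : tau x = u) (hy : tau y = u) : tau (x * y) = u := by
  rw [tau_mul_of_le hi hf hE (le_of_eq (hx.trans hy.symm)), hy]

private lemma tau_imp_eq (hi : Involutive X) (hf : fc X ≤ 1)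
    (hE : ∀ a : X, fc X < a → (1 : X) ≤ a)
    {x y u : X} (hx : tau x = u) (hy : tau y = u) : tau (imp x y) = u := by
  rw [imp_eq hi x y, tau_compl hi]
  exact tau_mul_eq hi hf hE hx ((tau_compl hi y).trans hy)

/-! Layer invertibility lemmas. -/

private lemma mul_tau_eq {x u : X} (hx : tau x = u) : x * u = x := by
  have h := mul_tau x; rwa [hx] at h

private lemma tau_mul_tau_eq {x u : X} (hx : tau x = u) : u * x = x := by
  rw [mul_comm]; exact mul_tau_eq hx

private lemma inv_dichotomy (hi : Involutive X) (hf : fc X ≤ 1)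
    (hE : ∀ a : X, fc X < a → (1 : X) ≤ a)
    {u x : X} (hu : u ∈ kappa X) (hx : tau x = u) :
    x * imp x u = u ∨ x * imp x u = compl u := by
  have htu : tau u = u := tau_fix hu.1 hu.2
  have hti : tau (imp x u) = u := tau_imp_eq hi hf hE hx htu
  have htz : tau (x * imp x u) = u := tau_mul_eq hi hf hE hx hti
  have hzu : x * imp x u ≤ u := mul_imp_le x u
  have hcz : compl u ≤ x * imp x u := by
    have h1 : compl (x * imp x u) ≤ u := by
      rw [compl_mul]
      have h2 : compl (imp x u) = x * compl u := by rw [imp_eq hi x u, hi]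
      rw [h2]
      calc imp x (x * compl u) ≤ imp x x := by
            apply imp_monoR x
            calc x * compl u ≤ x * 1 := mul_monoL x (le_trans (compl_le_f hu.1) hf)
              _ = x := mul_one x
        _ = u := hx
    have h3 := compl_anti h1
    rwa [hi] at h3
  rcases eq_or_lt_of_le hcz with h | h
  · right; exact h.symm
  rcases eq_or_lt_of_le hzu with h2 | h2
  · left; exact h2
  exact absurd (no_mid hi hf hE (by rw [htz]; exact h) (by rw [htz]; exact h2)) id

private lemma imp_inv_u (u x : X) : imp (x * imp x u) u = tau (imp x u) :=
  imp_curry x (imp x u) u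

private lemma z_mul_compl (hi : Involutive X) (hf : fc X ≤ 1)
    (hE : ∀ a : X, fc X < a → (1 : X) ≤ a)
    {u x : X} (hu : u ∈ kappa X) (hx : tau x = u) :
    (x * imp x u) * compl u = compl u := by
  have h1 : imp (x * imp x u) u = u := by
    rw [imp_inv_u]; exact tau_imp_eq hi hf hE hx (tau_fix hu.1 hu.2)
  have h2 : compl ((x * imp x u) * compl u) = u := by rw [← imp_eq hi]; exact h1
  have h3 := congrArg FLe.compl h2
  rwa [hi] at h3

private lemma mul_compl_lt (hi : Involutive X) (hf : fc X ≤ 1)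
    {u x : X} (hu : u ∈ kappa X) (hx : tau x = u)
    (hni : ¬ IsIdem (compl u)) : x * compl u < x := by
  have hle : x * compl u ≤ x := by
    calc x * compl u ≤ x * 1 := mul_monoL x (le_trans (compl_le_f hu.1) hf)
      _ = x := mul_one x
  rcases eq_or_lt_of_le hle with he | h
  · exfalso
    apply hni
    show compl u * compl u = compl u
    have h1 : x * compl x = compl u := by rw [mul_self_compl hi, hx]
    calc compl u * compl u = (x * compl x) * compl u := by rw [h1]
      _ = (x * compl u) * compl x := by
          rw [mul_right_comm]
      _ = x * compl x := by rw [he]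
      _ = compl u := h1
  · exact h

private lemma inv_of_KJ (hi : Involutive X) (hf : fc X ≤ 1)
    (hE : ∀ a : X, fc X < a → (1 : X) ≤ a)
    {u x : X} (hu : u ∈ kappa X) (hx : tau x = u)
    (hni : ¬ IsIdem (compl u)) : x * imp x u = u := by
  rcases inv_dichotomy hi hf hE hu hx with h | h
  · exact h
  · exfalso
    apply hni
    show compl u * compl u = compl u
    have h2 := z_mul_compl hi hf hE hu hx
    rwa [h] at h2

private lemma inv_iff (hi : Involutive X) (hf : fc X ≤ 1)
    (hE : ∀ a : X, fc X < a → (1 : X) ≤ a)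
    {u x : X} (hu : u ∈ kappa X) (hx : tau x = u)
    (hne : compl u ≠ u) : x * compl u < x ↔ x * imp x u = u := by
  constructor
  · intro h
    rcases inv_dichotomy hi hf hE hu hx with h1 | h1
    · exact h1
    · exfalso
      have e1 : compl (x * imp x u) = imp x (x * compl u) := by
        rw [compl_mul, imp_eq hi x u, hi]
      have e2 : compl (x * imp x u) = u := by rw [h1, hi]
      have e4 : u ≤ imp x (x * compl u) := by rw [← e1, e2]
      have e5 : x * u ≤ x * compl u := resid.mpr e4
      rw [mul_tau_eq hx] at e5
      exact absurd e5 (not_le_of_gt h)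
  · intro h
    have hle : x * compl u ≤ x := by
      calc x * compl u ≤ x * 1 := mul_monoL x (le_trans (compl_le_f hu.1) hf)
        _ = x := mul_one x
    rcases eq_or_lt_of_le hle with he | hlt
    · exfalso
      apply hne
      have h1 : x * compl x = compl u := by rw [mul_self_compl hi, hx]
      have h2 : imp x u = compl x := by rw [imp_eq hi, he]
      have h3 : x * imp x u = compl u := by rw [h2, h1]
      rw [← h3, h]
    · exact hlt

private lemma compl_ne (hi : Involutive X) (hf : fc X ≤ 1)
    {u : X} (hu : u ∈ kappa X) (hno : ¬((u : X) = 1 ∧ OddChain X)) :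
    compl u ≠ u := by
  intro he
  apply hno
  have h1 : u ≤ fc X := he ▸ compl_le_f hu.1
  have h2 : u = 1 := le_antisymm (h1.trans hf) hu.1
  refine ⟨h2, ?_⟩
  show FLe.compl (1 : X) = 1
  rw [← h2]
  exact he

/-! The closure operation `δ_u x = (x → u) → u` on a layer. -/

private def dd (u x : X) : X := imp (imp x u) u

private lemma le_dd (u x : X) : x ≤ dd u x :=
  resid.mp (by rw [mul_comm]; exact mul_imp_le x u)

private lemma dd_def (u x : X) : dd u x = imp (imp x u) u := rfl

private lemma imp_dd (u x : X) : imp (dd u x) u = imp x u := by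
  apply le_antisymm (imp_antiL u (le_dd u x))
  apply resid.mp
  rw [dd_def, mul_comm]
  exact mul_imp_le (imp x u) u

private lemma dd_dd (u x : X) : dd u (dd u x) = dd u x := by
  show imp (imp (dd u x) u) u = dd u x
  rw [imp_dd]
  exact (dd_def u x).symm

private lemma dd_mul (u x y : X) : dd u (dd u x * y) = dd u (x * y) := by
  show imp (imp (dd u x * y) u) u = imp (imp (x * y) u) u
  rw [imp_curry, imp_dd, ← imp_curry]

private lemma dd_compl (hi : Involutive X) (u x : X) :
    dd u x * compl u = x * compl u := by
  apply compl_inj hi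
  rw [compl_mul, compl_mul, hi]
  show imp (dd u x) u = imp x u
  exact imp_dd u x

private lemma tau_dd (hi : Involutive X) (hf : fc X ≤ 1)
    (hE : ∀ a : X, fc X < a → (1 : X) ≤ a)
    {u x : X} (hu : u ∈ kappa X) (hx : tau x = u) : tau (dd u x) = u := by
  have htu : tau u = u := tau_fix hu.1 hu.2
  exact tau_imp_eq hi hf hE (tau_imp_eq hi hf hE hx htu) htu

private lemma dd_of_inv (hi : Involutive X) (hf : fc X ≤ 1)
    (hE : ∀ a : X, fc X < a → (1 : X) ≤ a)
    {u x : X} (hu : u ∈ kappa X) (hx : tau x = u)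
    (h : x * imp x u = u) : dd u x = x := by
  apply le_antisymm _ (le_dd u x)
  have hd : tau (dd u x) = u := tau_dd hi hf hE hu hx
  have h2 : dd u x * imp x u ≤ u := by
    rw [mul_comm]
    exact mul_imp_le (imp x u) u
  calc dd u x = dd u x * u := (mul_tau_eq hd).symm
    _ = dd u x * (x * imp x u) := by rw [h]
    _ = (dd u x * imp x u) * x := by rw [mul_comm x (imp x u), ← mul_assoc]
    _ ≤ u * x := mul_monoR x h2
    _ = x := tau_mul_tau_eq hx

/-! Dotted elements and the layer-group carrier in the `κ_I` case. -/

private lemma mem_layer_iff {u x : X} : x ∈ layer u ↔ tau x = u := Iff.rfl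

private lemma dotted_of_not_fix (hi : Involutive X) (hf : fc X ≤ 1)
    (hE : ∀ a : X, fc X < a → (1 : X) ≤ a)
    {u x : X} (hki : inKI u) (hx : tau x = u)
    (hnf : dd u x ≠ x) : x ∈ dotH u := by
  obtain ⟨hu, hid, hno⟩ := hki
  have hne : compl u ≠ u := compl_ne hi hf hu hno
  have hlt : x < dd u x := lt_of_le_of_ne (le_dd u x) (Ne.symm hnf)
  have hda : tau (dd u x) = u := tau_dd hi hf hE hu hx
  have hdc : dd u x * compl u = x * compl u := dd_compl hi u x
  have hxle : x * compl u ≤ x := by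
    calc x * compl u ≤ x * 1 := mul_monoL x (le_trans (compl_le_f hu.1) hf)
      _ = x := mul_one x
  have hH : dd u x ∈ Hs u := ⟨hda, by rw [hdc]; exact lt_of_le_of_lt hxle hlt⟩
  have hxfix : x * compl u = x := by
    by_contra hne2
    have hlt2 : x * compl u < x := lt_of_le_of_ne hxle hne2
    have hinv : x * imp x u = u := (inv_iff hi hf hE hu hx hne).mp hlt2
    exact hnf (dd_of_inv hi hf hE hu hx hinv)
  exact ⟨dd u x, hH, by show dd u x * FLe.compl u = x; rw [hdc, hxfix]⟩

private lemma not_fix_of_dotted (hi : Involutive X) (hf : fc X ≤ 1)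
    (hE : ∀ a : X, fc X < a → (1 : X) ≤ a)
    {u x : X} (hki : inKI u) (hx : tau x = u)
    (hd : x ∈ dotH u) : dd u x ≠ x := by
  obtain ⟨hu, hid, hno⟩ := hki
  have hne : compl u ≠ u := compl_ne hi hf hu hno
  obtain ⟨a, haH, hax⟩ := hd
  obtain ⟨haL, halt⟩ := haH
  have hta : tau a = u := haL
  have hainv : a * imp a u = u := (inv_iff hi hf hE hu hta hne).mp halt
  have hdda : dd u a = a := dd_of_inv hi hf hE hu hta hainv
  have h1 : imp x u = imp a u := by
    rw [← hax, imp_eq hi, mul_assoc, (hid : compl u * compl u = compl u), ← imp_eq hi]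
  have h2 : dd u x = a := by
    show imp (imp x u) u = a
    rw [h1]
    exact hdda
  rw [h2, ← hax]
  exact ne_of_gt halt

private lemma mem_Gs_iff_KI (hi : Involutive X) (hf : fc X ≤ 1)
    (hE : ∀ a : X, fc X < a → (1 : X) ≤ a)
    {u x : X} (hki : inKI u) (hx : tau x = u) :
    x ∈ Gs u ↔ dd u x = x := by
  constructor
  · rintro ⟨-, himp⟩
    by_contra hnf
    exact (himp hki) (dotted_of_not_fix hi hf hE hki hx hnf)
  · intro hfix
    exact ⟨hx, fun _ hd => (not_fix_of_dotted hi hf hE hki hx hd) hfix⟩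

private lemma mem_Gs_iff_not {u x : X} (hki : ¬ inKI u) : x ∈ Gs u ↔ tau x = u :=
  ⟨fun h => h.1, fun h => ⟨h, fun hk => absurd hk hki⟩⟩

/-! Transition lemmas. -/

private lemma kmul_self {u v : X} (hu : u ∈ kappa X) (hv : v ∈ kappa X)
    (huv : u ≤ v) : v * u = v := by
  apply le_antisymm
  · calc v * u ≤ v * v := mul_monoL v huv
      _ = v := hv.2
  · simpa using mul_monoL v hu.1

private lemma kmul_compl (hi : Involutive X) (hf : fc X ≤ 1)
    (hE : ∀ a : X, fc X < a → (1 : X) ≤ a)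
    {u v : X} (hu : u ∈ kappa X) (hv : v ∈ kappa X)
    (huv : u < v) : v * compl u = v := by
  have htv : tau v = v := tau_fix hv.1 hv.2
  have htu : tau u = u := tau_fix hu.1 hu.2
  have htd : tau (imp v u) = v := by
    have h1 : tau (compl u) ≤ tau v := by
      rw [tau_compl hi, htu, htv]; exact huv.le
    rw [imp_eq hi, tau_compl hi, mul_comm v (compl u), tau_mul_of_le hi hf hE h1, htv]
  have hdlev : imp v u ≤ v := by
    calc imp v u ≤ imp v v := imp_monoR v huv.le
      _ = v := htv
  have hcvd : compl v ≤ imp v u := by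
    apply resid.mp
    rw [mul_self_compl hi, htv]
    exact le_trans (compl_le_f hv.1) (le_trans hf hu.1)
  have hdne : imp v u ≠ v := by
    intro he
    have h2 := mul_imp_le v u
    rw [he, hv.2] at h2
    exact absurd h2 (not_le_of_gt huv)
  have hdc : imp v u = compl v := by
    rcases eq_or_lt_of_le hcvd with h | h
    · exact h.symm
    rcases eq_or_lt_of_le hdlev with h2 | h2
    · exact absurd h2 hdne
    exact absurd (no_mid hi hf hE (by rw [htd]; exact h) (by rw [htd]; exact h2)) id
  apply compl_inj hi
  rw [compl_mul, hi, hdc]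

private lemma inv_of_witness {v y w : X} (hw : y * w = v) : y * imp y v = v := by
  have h1 : w ≤ imp y v := resid.mp (le_of_eq hw)
  have h2 : v ≤ y * imp y v := by
    calc v = y * w := hw.symm
      _ ≤ y * imp y v := mul_monoL y h1
  exact le_antisymm (mul_imp_le y v) h2

private lemma tr_inv (hi : Involutive X) (hf : fc X ≤ 1)
    (hE : ∀ a : X, fc X < a → (1 : X) ≤ a)
    {u v x : X} (hu : u ∈ kappa X) (hv : v ∈ kappa X)
    (huv : u < v) (hx : tau x = u) : (v * x) * imp (v * x) v = v := by
  apply inv_of_witness (w := v * imp x u)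
  have h1 : (v * x) * (v * imp x u) = v * (x * imp x u) := by
    calc (v * x) * (v * imp x u) = (v * v) * (x * imp x u) := mul_mul_mul_comm v x v (imp x u)
      _ = v * (x * imp x u) := by rw [hv.2]
  rw [h1]
  rcases inv_dichotomy hi hf hE hu hx with h | h
  · rw [h]; exact kmul_self hu hv huv.le
  · rw [h]; exact kmul_compl hi hf hE hu hv huv

private lemma tau_trans (hi : Involutive X) (hf : fc X ≤ 1)
    (hE : ∀ a : X, fc X < a → (1 : X) ≤ a)
    {u v x : X} (hv : v ∈ kappa X) (hxu : tau x = u) (huv : u ≤ v) :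
    tau (v * x) = v := by
  have htv : tau v = v := tau_fix hv.1 hv.2
  rw [mul_comm, tau_mul_of_le hi hf hE (by rw [hxu, htv]; exact huv), htv]

private lemma lower_min (hi : Involutive X) (hf : fc X ≤ 1)
    (hE : ∀ a : X, fc X < a → (1 : X) ≤ a)
    {u x z : X} (hu : u ∈ kappa X) (hx : tau x = u)
    (hz : tau z = u) (hinv : x * imp x u = u) (hzx : z < x) : z ≤ x * compl u := by
  have hti : tau (imp x u) = u := tau_imp_eq hi hf hE hx (tau_fix hu.1 hu.2)
  have htw : tau (z * imp x u) = u := tau_mul_eq hi hf hE hz hti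
  have hwu : z * imp x u ≤ u := by
    have h := mul_monoR (imp x u) hzx.le
    rwa [hinv] at h
  have hzeq : x * (z * imp x u) = z := by
    rw [mul_left_comm x z (imp x u), hinv]
    exact mul_tau_eq hz
  have hne : z * imp x u ≠ u := by
    intro he
    rw [he, mul_tau_eq hx] at hzeq
    exact absurd hzeq (ne_of_gt hzx)
  have hwlt : z * imp x u < u := lt_of_le_of_ne hwu hne
  have hwle : z * imp x u ≤ compl u := by
    by_contra hc
    push_neg at hc
    exact no_mid hi hf hE (by rw [htw]; exact hc) (by rw [htw]; exact hwlt)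
  calc z = x * (z * imp x u) := hzeq.symm
    _ ≤ x * compl u := mul_monoL x hwle

/-! Assembly of the bunch axioms. -/

private lemma isBunch_of (X : Type u) [FLeChain X] (hi : Involutive X) (hf : fc X ≤ 1)
    (hE : ∀ a : X, fc X < a → (1 : X) ≤ a) : (bunchOfChain X).IsBunch := by
  have tauK : ∀ u : kappaT X, tau (u : X) = (u : X) := fun u => tau_fix u.2.1 u.2.2
  have layerG : ∀ (u : kappaT X) (x : X), x ∈ Gs (u : X) → tau x = (u : X) :=
    fun u x hx => hx.1
  have taugm : ∀ (u : kappaT X) {x y : X}, tau x = (u : X) → tau y = (u : X) →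
      tau (FLe.gmul (u : X) x y) = (u : X) := by
    intro u x y hx hy
    have h1 : tau (x * y) = (u : X) := tau_mul_eq hi hf hE hx hy
    by_cases hk : inKI (u : X)
    · show tau (if inKI (u : X) then imp (imp (x * y) (u : X)) (u : X) else x * y) = (u : X)
      rw [if_pos hk]
      exact tau_dd hi hf hE u.2 h1
    · show tau (if inKI (u : X) then imp (imp (x * y) (u : X)) (u : X) else x * y) = (u : X)
      rw [if_neg hk]
      exact h1
  refine
    { t_least := fun u => u.2.1
      cover := ?_, disjOJ := ?_, disjOI := ?_, disjJI := ?_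
      unit_mem := ?_, mul_mem := ?_, inv_mem := ?_
      mul_assoc' := ?_, mul_comm' := ?_, mul_unit' := ?_, mul_inv' := ?_
      le_refl' := fun _ x _ => le_refl x
      le_trans' := fun _ x _ y _ z _ h1 h2 => le_trans h1 h2
      le_antisymm' := fun _ x _ y _ h1 h2 => le_antisymm h1 h2
      le_total' := fun _ x _ y _ => le_total x y
      mul_le_mul' := ?_
      tr_mem := ?_, tr_id := ?_, tr_comp := ?_, tr_unit := ?_, tr_mul := ?_
      tr_mono := fun _ _ _ x _ y _ hxy => mul_monoL _ hxy
      g1 := ?_, g2_sub := ?_, g2_tr := ?_, g3_disc := ?_, g3_tr := ?_ }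
  -- cover
  · intro u
    by_cases h1 : IsIdem (FLe.compl (u : X))
    · by_cases h2 : (u : X) ∈ kappaO X
      · exact Or.inl h2
      · exact Or.inr (Or.inr ⟨u.2, h1, h2⟩)
    · exact Or.inr (Or.inl ⟨u.2, h1⟩)
  -- disjOJ
  · rintro u ⟨ho, hj⟩
    apply hj.2
    have h1 : FLe.compl (u : X) = 1 := by rw [ho.1]; exact ho.2
    show FLe.compl (u : X) * FLe.compl (u : X) = FLe.compl (u : X)
    rw [h1, mul_one]
  -- disjOI
  · rintro u ⟨ho, hI⟩
    exact hI.2.2 ho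
  -- disjJI
  · rintro u ⟨hj, hI⟩
    exact hj.2 hI.2.1
  -- unit_mem
  · intro u
    show (u : X) ∈ Gs (u : X)
    by_cases hk : inKI (u : X)
    · refine (mem_Gs_iff_KI hi hf hE hk (tauK u)).mpr ?_
      have e : FLe.imp (u : X) (u : X) = (u : X) := tauK u
      rw [dd_def, e, e]
    · exact (mem_Gs_iff_not hk).mpr (tauK u)
  -- mul_mem
  · intro u x hx y hy
    show FLe.gmul (u : X) x y ∈ Gs (u : X)
    have h1 : tau (x * y) = (u : X) := tau_mul_eq hi hf hE (layerG u x hx) (layerG u y hy)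
    by_cases hk : inKI (u : X)
    · show (if inKI (u : X) then imp (imp (x * y) (u : X)) (u : X) else x * y) ∈ Gs (u : X)
      rw [if_pos hk]
      refine (mem_Gs_iff_KI hi hf hE hk (tau_dd hi hf hE u.2 h1)).mpr ?_
      exact dd_dd (u : X) (x * y)
    · show (if inKI (u : X) then imp (imp (x * y) (u : X)) (u : X) else x * y) ∈ Gs (u : X)
      rw [if_neg hk]
      exact (mem_Gs_iff_not hk).mpr h1
  -- inv_mem
  · intro u x hx
    show FLe.imp x (u : X) ∈ Gs (u : X)
    have hti : tau (imp x (u : X)) = (u : X) :=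
      tau_imp_eq hi hf hE (layerG u x hx) (tauK u)
    by_cases hk : inKI (u : X)
    · refine (mem_Gs_iff_KI hi hf hE hk hti).mpr ?_
      show imp (imp (imp x (u : X)) (u : X)) (u : X) = imp x (u : X)
      exact imp_dd (u : X) x
    · exact (mem_Gs_iff_not hk).mpr hti
  -- mul_assoc'
  · intro u x _ y _ z _
    show FLe.gmul (u : X) (FLe.gmul (u : X) x y) z = FLe.gmul (u : X) x (FLe.gmul (u : X) y z)
    by_cases hk : inKI (u : X)
    · simp only [FLe.gmul, if_pos hk]
      show dd (u : X) (dd (u : X) (x * y) * z) = dd (u : X) (x * dd (u : X) (y * z))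
      rw [dd_mul, mul_comm x (dd (u : X) (y * z)), dd_mul, mul_comm (y * z) x, ← mul_assoc]
    · simp only [FLe.gmul, if_neg hk]
      exact mul_assoc x y z
  -- mul_comm'
  · intro u x _ y _
    show FLe.gmul (u : X) x y = FLe.gmul (u : X) y x
    simp only [FLe.gmul]
    rw [mul_comm x y]
  -- mul_unit'
  · intro u x hx
    show FLe.gmul (u : X) x (u : X) = x
    have hxu : x * (u : X) = x := mul_tau_eq (layerG u x hx)
    by_cases hk : inKI (u : X)
    · simp only [FLe.gmul, if_pos hk]
      show dd (u : X) (x * (u : X)) = x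
      rw [hxu]
      exact (mem_Gs_iff_KI hi hf hE hk (layerG u x hx)).mp hx
    · simp only [FLe.gmul, if_neg hk]
      exact hxu
  -- mul_inv'
  · intro u x hx
    show FLe.gmul (u : X) x (FLe.imp x (u : X)) = (u : X)
    have hx' : tau x = (u : X) := layerG u x hx
    by_cases hk : inKI (u : X)
    · simp only [FLe.gmul, if_pos hk]
      show dd (u : X) (x * imp x (u : X)) = (u : X)
      have h1 : imp (x * imp x (u : X)) (u : X) = (u : X) := by
        rw [imp_inv_u]
        exact tau_imp_eq hi hf hE hx' (tauK u)
      rw [dd_def, h1]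
      exact tauK u
    · simp only [FLe.gmul, if_neg hk]
      by_cases hid : IsIdem (FLe.compl (u : X))
      · have ho : (u : X) ∈ kappaO X := by
          by_contra hno
          exact hk ⟨u.2, hid, hno⟩
        have hcu : FLe.compl (u : X) = (u : X) := by
          have h2 : FLe.compl (1 : X) = 1 := ho.2
          rw [ho.1]; exact h2
        rcases inv_dichotomy hi hf hE u.2 hx' with h | h
        · exact h
        · rw [hcu] at h; exact h
      · exact inv_of_KJ hi hf hE u.2 hx' hid
  -- mul_le_mul'
  · intro u x _ y _ z _ hxy
    show FLe.gmul (u : X) z x ≤ FLe.gmul (u : X) z y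
    by_cases hk : inKI (u : X)
    · simp only [FLe.gmul, if_pos hk]
      exact imp_antiL _ (imp_antiL _ (mul_monoL z hxy))
    · simp only [FLe.gmul, if_neg hk]
      exact mul_monoL z hxy
  -- tr_mem
  · intro u v huv x hx
    show (v : X) * x ∈ Gs (v : X)
    rcases eq_or_lt_of_le huv with he | hlt
    · cases he
      have hux : (u : X) * x = x := tau_mul_tau_eq (layerG u x hx)
      rw [hux]; exact hx
    · have hlt' : (u : X) < (v : X) := hlt
      have htv : tau ((v : X) * x) = (v : X) :=
        tau_trans hi hf hE v.2 (layerG u x hx) hlt'.le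
      by_cases hk : inKI (v : X)
      · exact (mem_Gs_iff_KI hi hf hE hk htv).mpr
          (dd_of_inv hi hf hE v.2 htv (tr_inv hi hf hE u.2 v.2 hlt' (layerG u x hx)))
      · exact (mem_Gs_iff_not hk).mpr htv
  -- tr_id
  · intro u x hx
    show (u : X) * x = x
    exact tau_mul_tau_eq (layerG u x hx)
  -- tr_comp
  · intro u v w huv hvw x _
    show (w : X) * ((v : X) * x) = (w : X) * x
    rw [← mul_assoc, kmul_self v.2 w.2 hvw]
  -- tr_unit
  · intro u v huv
    show (v : X) * (u : X) = (v : X)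
    exact kmul_self u.2 v.2 huv
  -- tr_mul
  · intro u v huv x hx y hy
    show (v : X) * FLe.gmul (u : X) x y = FLe.gmul (v : X) ((v : X) * x) ((v : X) * y)
    have hx' : tau x = (u : X) := layerG u x hx
    have hy' : tau y = (u : X) := layerG u y hy
    have htxy : tau (x * y) = (u : X) := tau_mul_eq hi hf hE hx' hy'
    rcases eq_or_lt_of_le huv with he | hlt
    · cases he
      rw [tau_mul_tau_eq hx', tau_mul_tau_eq hy']
      exact tau_mul_tau_eq (taugm u hx' hy')
    · have hlt' : (u : X) < (v : X) := hlt
      have hvv : ((v : X) * x) * ((v : X) * y) = (v : X) * (x * y) := by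
        rw [mul_mul_mul_comm, v.2.2]
      have hvcu : (v : X) * FLe.compl (u : X) = (v : X) :=
        kmul_compl hi hf hE u.2 v.2 hlt'
      have hLHS : (v : X) * FLe.gmul (u : X) x y = (v : X) * (x * y) := by
        by_cases hk : inKI (u : X)
        · show (v : X) * (if inKI (u : X) then imp (imp (x * y) (u : X)) (u : X) else x * y)
            = (v : X) * (x * y)
          rw [if_pos hk]
          show (v : X) * dd (u : X) (x * y) = (v : X) * (x * y)
          calc (v : X) * dd (u : X) (x * y)
              = ((v : X) * FLe.compl (u : X)) * dd (u : X) (x * y) := by rw [hvcu]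
            _ = (v : X) * (dd (u : X) (x * y) * FLe.compl (u : X)) := by
                rw [mul_assoc, mul_comm (FLe.compl (u : X)) (dd (u : X) (x * y))]
            _ = (v : X) * ((x * y) * FLe.compl (u : X)) := by rw [dd_compl hi]
            _ = ((v : X) * FLe.compl (u : X)) * (x * y) := by
                rw [mul_comm (x * y) (FLe.compl (u : X)), ← mul_assoc]
            _ = (v : X) * (x * y) := by rw [hvcu]
        · show (v : X) * (if inKI (u : X) then imp (imp (x * y) (u : X)) (u : X) else x * y)
            = (v : X) * (x * y)
          rw [if_neg hk]
      rw [hLHS]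
      have htvxy : tau ((v : X) * (x * y)) = (v : X) :=
        tau_trans hi hf hE v.2 htxy hlt'.le
      by_cases hk : inKI (v : X)
      · show (v : X) * (x * y)
          = (if inKI (v : X) then
              imp (imp (((v : X) * x) * ((v : X) * y)) (v : X)) (v : X)
            else ((v : X) * x) * ((v : X) * y))
        rw [if_pos hk]
        show (v : X) * (x * y) = dd (v : X) (((v : X) * x) * ((v : X) * y))
        rw [hvv]
        exact (dd_of_inv hi hf hE v.2 htvxy
          (tr_inv hi hf hE u.2 v.2 hlt' htxy)).symm
      · show (v : X) * (x * y)
          = (if inKI (v : X) then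
              imp (imp (((v : X) * x) * ((v : X) * y)) (v : X)) (v : X)
            else ((v : X) * x) * ((v : X) * y))
        rw [if_neg hk]
        exact hvv.symm
  -- g1
  · intro w hw
    have h1 : (w : X) = 1 := hw.1
    show w ∈ {(⟨1, le_refl 1, mul_one 1⟩ : kappaT X)}
    exact Set.mem_singleton_iff.mpr (Subtype.ext h1)
  -- g2_sub
  · intro v hkv0
    have hkv : inKI (v : X) := hkv0
    have hv := v.2
    have hne : FLe.compl (v : X) ≠ (v : X) := compl_ne hi hf hv hkv.2.2
    have hinv_of_H : ∀ a ∈ Hs (v : X), a * imp a (v : X) = (v : X) := fun a ha =>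
      (inv_iff hi hf hE hv ha.1 hne).mp ha.2
    have hH_G : ∀ a ∈ Hs (v : X), a ∈ Gs (v : X) := fun a ha =>
      (mem_Gs_iff_KI hi hf hE hkv ha.1).mpr
        (dd_of_inv hi hf hE hv ha.1 (hinv_of_H a ha))
    refine ⟨hH_G, ⟨tauK v, ?_⟩, ?_, ?_⟩
    · -- v * compl v < v
      show (v : X) * FLe.compl (v : X) < (v : X)
      rw [mul_self_compl hi, tauK v]
      exact lt_of_le_of_ne (le_trans (compl_le_f hv.1) (le_trans hf hv.1)) hne
    · -- multiplication closed on H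
      intro a ha b hb
      show FLe.gmul (v : X) a b ∈ Hs (v : X)
      have hta : tau a = (v : X) := ha.1
      have htb : tau b = (v : X) := hb.1
      have hainv := hinv_of_H a ha
      have hbinv := hinv_of_H b hb
      have htab : tau (a * b) = (v : X) := tau_mul_eq hi hf hE hta htb
      have htz : tau (dd (v : X) (a * b)) = (v : X) := tau_dd hi hf hE hv htab
      show (if inKI (v : X) then imp (imp (a * b) (v : X)) (v : X) else a * b) ∈ Hs (v : X)
      rw [if_pos hkv]
      refine ⟨htz, ?_⟩
      refine (inv_iff hi hf hE hv htz hne).mpr ?_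
      apply inv_of_witness (w := dd (v : X) (imp a (v : X) * imp b (v : X)))
      have h2 : (imp a (v : X) * imp b (v : X)) * (a * b)
          = (a * imp a (v : X)) * (b * imp b (v : X)) := by
        rw [mul_mul_mul_comm, mul_comm (imp a (v : X)) a, mul_comm (imp b (v : X)) b]
      have h3 : (a * b) * (imp a (v : X) * imp b (v : X)) = (v : X) := by
        rw [mul_mul_mul_comm, hainv, hbinv, hv.2]
      have h1 : dd (v : X) (dd (v : X) (a * b) * dd (v : X) (imp a (v : X) * imp b (v : X)))
          = (v : X) := by
        rw [dd_mul, mul_comm (a * b) (dd (v : X) (imp a (v : X) * imp b (v : X))), dd_mul,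
          h2, hainv, hbinv, hv.2]
        have e : FLe.imp (v : X) (v : X) = (v : X) := tauK v
        rw [dd_def, e, e]
      apply le_antisymm
      · exact le_of_le_of_eq (le_dd _ _) h1
      · calc (v : X) = (a * b) * (imp a (v : X) * imp b (v : X)) := h3.symm
          _ ≤ dd (v : X) (a * b) * (imp a (v : X) * imp b (v : X)) :=
              mul_monoR _ (le_dd _ _)
          _ ≤ dd (v : X) (a * b) * dd (v : X) (imp a (v : X) * imp b (v : X)) :=
              mul_monoL _ (le_dd _ _)
    · -- inversion closed on H
      intro a ha
      show FLe.imp a (v : X) ∈ Hs (v : X)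
      have hta : tau (imp a (v : X)) = (v : X) := tau_imp_eq hi hf hE ha.1 (tauK v)
      refine ⟨hta, (inv_iff hi hf hE hv hta hne).mpr ?_⟩
      apply inv_of_witness (w := a)
      rw [mul_comm]
      exact hinv_of_H a ha
  -- g2_tr
  · intro v hkv u hlt x hx
    show (v : X) * x ∈ Hs (v : X)
    have hlt' : (u : X) < (v : X) := hlt
    have htv : tau ((v : X) * x) = (v : X) :=
      tau_trans hi hf hE v.2 (layerG u x hx) hlt'.le
    have hne : FLe.compl (v : X) ≠ (v : X) := compl_ne hi hf v.2 hkv.2.2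
    exact ⟨htv, (inv_iff hi hf hE v.2 htv hne).mpr
      (tr_inv hi hf hE u.2 v.2 hlt' (layerG u x hx))⟩
  -- g3_disc
  · intro u hku x hx
    have hu := u.2
    have hni : ¬ IsIdem (FLe.compl (u : X)) := hku.2
    have hnki : ¬ inKI (u : X) := fun hk => hni hk.2.1
    have hx' : tau x = (u : X) := layerG u x hx
    have hinv : x * imp x (u : X) = (u : X) := inv_of_KJ hi hf hE hu hx' hni
    have hcleF : tau (FLe.compl (u : X)) = (u : X) := by rw [tau_compl hi]; exact tauK u
    constructor
    · -- lower cover: x * u'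
      have hlt0 : x * FLe.compl (u : X) < x := mul_compl_lt hi hf hu hx' hni
      have htp : tau (x * FLe.compl (u : X)) = (u : X) := tau_mul_eq hi hf hE hx' hcleF
      have hpG : x * FLe.compl (u : X) ∈ Gs (u : X) := (mem_Gs_iff_not hnki).mpr htp
      refine ⟨x * FLe.compl (u : X), hpG, ⟨hlt0.le, hlt0.ne⟩, ?_⟩
      intro z hz hzx
      exact lower_min hi hf hE hu hx' hz.1 hinv (lt_of_le_of_ne hzx.1 hzx.2)
    · -- upper cover: (x' * u')'
      have hcx : tau (FLe.compl x) = (u : X) := by rw [tau_compl hi]; exact hx'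
      have hcinv : FLe.compl x * imp (FLe.compl x) (u : X) = (u : X) :=
        inv_of_KJ hi hf hE hu hcx hni
      have hts : tau (FLe.compl (FLe.compl x * FLe.compl (u : X))) = (u : X) := by
        rw [tau_compl hi]
        exact tau_mul_eq hi hf hE hcx hcleF
      have hslt : x < FLe.compl (FLe.compl x * FLe.compl (u : X)) := by
        have h1 : FLe.compl (FLe.compl (FLe.compl x * FLe.compl (u : X))) < FLe.compl x := by
          rw [hi]
          exact mul_compl_lt hi hf hu hcx hni
        exact compl_lt_compl hi h1
      have hsG : FLe.compl (FLe.compl x * FLe.compl (u : X)) ∈ Gs (u : X) :=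
        (mem_Gs_iff_not hnki).mpr hts
      refine ⟨FLe.compl (FLe.compl x * FLe.compl (u : X)), hsG, ⟨hslt.le, hslt.ne⟩, ?_⟩
      intro z hz hxz
      have hxz' : x < z := lt_of_le_of_ne hxz.1 hxz.2
      have hcz : FLe.compl z < FLe.compl x := by
        apply lt_of_le_of_ne (compl_anti hxz'.le)
        intro he
        exact hxz'.ne (compl_inj hi he).symm
      have hczu : tau (FLe.compl z) = (u : X) := by rw [tau_compl hi]; exact hz.1
      have h2 : FLe.compl z ≤ FLe.compl x * FLe.compl (u : X) :=
        lower_min hi hf hE hu hcx hczu hcinv hcz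
      have h3 : FLe.compl (FLe.compl x * FLe.compl (u : X)) ≤ FLe.compl (FLe.compl z) :=
        compl_anti h2
      rwa [hi z] at h3
  -- g3_tr
  · intro u hku v hltv p hp
    show (v : X) * (u : X) = (v : X) * p
    have hu := u.2
    have hv := v.2
    have hni : ¬ IsIdem (FLe.compl (u : X)) := hku.2
    have hnki : ¬ inKI (u : X) := fun hk => hni hk.2.1
    have hltv' : (u : X) < (v : X) := hltv
    have htu : tau (u : X) = (u : X) := tauK u
    have huc : (u : X) * FLe.compl (u : X) = FLe.compl (u : X) := by
      rw [mul_self_compl hi, htu]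
    have hinvu : (u : X) * imp (u : X) (u : X) = (u : X) := inv_of_KJ hi hf hE hu htu hni
    obtain ⟨hpG, hplt, hpmin⟩ := hp
    have hplt' : p < (u : X) := lt_of_le_of_ne hplt.1 hplt.2
    have h1 : p ≤ FLe.compl (u : X) := by
      have h0 := lower_min hi hf hE hu htu hpG.1 hinvu hplt'
      rwa [huc] at h0
    have hcuG : FLe.compl (u : X) ∈ Gs (u : X) := (mem_Gs_iff_not hnki).mpr
      (by rw [tau_compl hi]; exact htu)
    have hculty : FLe.compl (u : X) < (u : X) := by
      have h0 := mul_compl_lt hi hf hu htu hni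
      rwa [huc] at h0
    have h2 : FLe.compl (u : X) ≤ p := hpmin (FLe.compl (u : X)) hcuG ⟨hculty.le, hculty.ne⟩
    have hpe : p = FLe.compl (u : X) := le_antisymm h1 h2
    rw [hpe, kmul_self hu hv hltv'.le, kmul_compl hi hf hE hu hv hltv']

end BunchAux

open FLe

/-- Representation, direction A: for every odd or even involutive
FL_e-chain `X`, the structure `𝒢_X = ⟨G_u, H_u, ς_{u→v}⟩` over
`⟨κ_o, κ_J, κ_I, ≤⟩` constructed from `X` is a bunch of layer groups. -/
theorem bunchOfChain_isBunch (X : Type u) [FLeChain X] (h : OddEven X) :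
    (bunchOfChain X).IsBunch := by
  obtain ⟨hi, hoe⟩ := h
  have hfc1 : OddChain X → fc X = 1 := by
    intro ho
    rw [← BunchAux.imp_one (fc X)]
    exact ho
  have hf : fc X ≤ 1 := by
    rcases hoe with ho | he
    · exact le_of_eq (hfc1 ho)
    · exact le_of_lt ((he (fc X)).mpr le_rfl)
  have hE : ∀ a : X, fc X < a → (1 : X) ≤ a := by
    intro a ha
    rcases hoe with ho | he
    · rw [hfc1 ho] at ha
      exact ha.le
    · by_contra hc
      push_neg at hc
      exact absurd ((he a).mp hc) (not_le_of_gt ha)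
  exact BunchAux.isBunch_of X hi hf hE
end
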